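/- arXiv:2011.13461 — 3 statements merged into one kernel-verified Lean document; each statement's English description precedes it below -/
import Mathlib

section
/- With the factorization P₄ = K₁K₂ of the preceding context, if additionally H equals the reduced Hessian L_zz := R_zᵀ R_u⁻ᵀ L_uu R_u⁻¹ R_z − R_zᵀ R_u⁻ᵀ L_uz − L_zu R_u⁻¹ R_z + L_zz^{dd} (with (2,2) Hessian block L_zz^{dd}), then K₁K₂ equals the full KKT matrix K = [[L_uu, L_uz, R_uᵀ], [L_zu, L_zz^{dd}, R_zᵀ], [R_u, R_z, 0]]. -/
/-!
Multiply the factors blockwise. Since `Ru⁻¹ Ru = 1` and `Ru⁻ᵀ Ruᵀ = 1`, every block of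
`K₁K₂` except the `(z, z)` one collapses to the corresponding block of `K` by cancellation;
the `(z, z)` block is `Lzu Ru⁻¹ Rz + H + Rzᵀ Ru⁻ᵀ (Luz - Luu Ru⁻¹ Rz)`, which is exactly `Ldd`
when `H` is the reduced Hessian.
-/

open Matrix

/-- Assemble a 3×3 block matrix with row/column block sizes (n, m, n). -/
def blk3 {n m : ℕ}
    (A11 : Matrix (Fin n) (Fin n) ℝ) (A12 : Matrix (Fin n) (Fin m) ℝ) (A13 : Matrix (Fin n) (Fin n) ℝ)
    (A21 : Matrix (Fin m) (Fin n) ℝ) (A22 : Matrix (Fin m) (Fin m) ℝ) (A23 : Matrix (Fin m) (Fin n) ℝ)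
    (A31 : Matrix (Fin n) (Fin n) ℝ) (A32 : Matrix (Fin n) (Fin m) ℝ) (A33 : Matrix (Fin n) (Fin n) ℝ) :
    Matrix ((Fin n ⊕ Fin m) ⊕ Fin n) ((Fin n ⊕ Fin m) ⊕ Fin n) ℝ :=
  Matrix.fromBlocks (Matrix.fromBlocks A11 A12 A21 A22) (Matrix.fromRows A13 A23)
    (Matrix.fromCols A31 A32) A33

theorem blk3_mul_blk3 {n m : ℕ}
    (A11 : Matrix (Fin n) (Fin n) ℝ) (A12 : Matrix (Fin n) (Fin m) ℝ) (A13 : Matrix (Fin n) (Fin n) ℝ)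
    (A21 : Matrix (Fin m) (Fin n) ℝ) (A22 : Matrix (Fin m) (Fin m) ℝ) (A23 : Matrix (Fin m) (Fin n) ℝ)
    (A31 : Matrix (Fin n) (Fin n) ℝ) (A32 : Matrix (Fin n) (Fin m) ℝ) (A33 : Matrix (Fin n) (Fin n) ℝ)
    (B11 : Matrix (Fin n) (Fin n) ℝ) (B12 : Matrix (Fin n) (Fin m) ℝ) (B13 : Matrix (Fin n) (Fin n) ℝ)
    (B21 : Matrix (Fin m) (Fin n) ℝ) (B22 : Matrix (Fin m) (Fin m) ℝ) (B23 : Matrix (Fin m) (Fin n) ℝ)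
    (B31 : Matrix (Fin n) (Fin n) ℝ) (B32 : Matrix (Fin n) (Fin m) ℝ) (B33 : Matrix (Fin n) (Fin n) ℝ) :
    blk3 A11 A12 A13 A21 A22 A23 A31 A32 A33 * blk3 B11 B12 B13 B21 B22 B23 B31 B32 B33 =
      blk3 (A11 * B11 + A12 * B21 + A13 * B31) (A11 * B12 + A12 * B22 + A13 * B32)
        (A11 * B13 + A12 * B23 + A13 * B33)
        (A21 * B11 + A22 * B21 + A23 * B31) (A21 * B12 + A22 * B22 + A23 * B32)
        (A21 * B13 + A22 * B23 + A23 * B33)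
        (A31 * B11 + A32 * B21 + A33 * B31) (A31 * B12 + A32 * B22 + A33 * B32)
        (A31 * B13 + A32 * B23 + A33 * B33) := by
  simp only [blk3, fromBlocks_multiply, fromBlocks_mul_fromRows, fromCols_mul_fromBlocks,
    fromCols_mul_fromRows, mul_fromCols, fromRows_mul, fromCols_fromRows_eq_fromBlocks,
    fromBlocks_add]
  congr 1
  · ext (i | i) j <;> simp
  · ext i (j | j) <;> simp

theorem stmt_3_general {n m : ℕ} (Ru : Matrix (Fin n) (Fin n) ℝ) (Rz : Matrix (Fin n) (Fin m) ℝ)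
    (Luu : Matrix (Fin n) (Fin n) ℝ) (Luz : Matrix (Fin n) (Fin m) ℝ)
    (Lzu : Matrix (Fin m) (Fin n) ℝ) (Ldd : Matrix (Fin m) (Fin m) ℝ)
    (H : Matrix (Fin m) (Fin m) ℝ)
    (hRu : IsUnit Ru)
    (hH : H = Rzᵀ * (Ruᵀ)⁻¹ * Luu * Ru⁻¹ * Rz - Rzᵀ * (Ruᵀ)⁻¹ * Luz - Lzu * Ru⁻¹ * Rz + Ldd) :
    (blk3 (Luu * Ru⁻¹) 0 1 (Lzu * Ru⁻¹) 1 (Rzᵀ * (Ruᵀ)⁻¹) 1 0 0) *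
      (blk3 Ru Rz 0 0 H 0 0 (Luz - Luu * Ru⁻¹ * Rz) Ruᵀ) =
    blk3 Luu Luz Ruᵀ Lzu Ldd Rzᵀ Ru Rz 0 := by
  have hdet : IsUnit Ru.det := (isUnit_iff_isUnit_det Ru).mp hRu
  have hinv : Ru⁻¹ * Ru = 1 := nonsing_inv_mul Ru hdet
  have hinvT : (Ruᵀ)⁻¹ * Ruᵀ = 1 := nonsing_inv_mul Ruᵀ (by rwa [det_transpose])
  rw [blk3_mul_blk3, hH]
  congr 1 <;>
    simp only [Matrix.mul_zero, Matrix.zero_mul, Matrix.mul_one, Matrix.one_mul, add_zero,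
      zero_add, Matrix.mul_sub, Matrix.mul_assoc, hinv, hinvT] <;>
    abel

/-- If `H` equals the exact reduced Hessian, the factorization `K₁K₂` recovers the full
KKT matrix. -/
theorem stmt_3 {n m : ℕ} (Ru : Matrix (Fin n) (Fin n) ℝ) (Rz : Matrix (Fin n) (Fin m) ℝ)
    (Luu : Matrix (Fin n) (Fin n) ℝ) (Luz : Matrix (Fin n) (Fin m) ℝ)
    (Lzu : Matrix (Fin m) (Fin n) ℝ) (Ldd : Matrix (Fin m) (Fin m) ℝ)
    (H : Matrix (Fin m) (Fin m) ℝ)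
    (hRu : IsUnit Ru) (hLzu : Lzu = Luzᵀ)
    (hH : H = Rzᵀ * (Ruᵀ)⁻¹ * Luu * Ru⁻¹ * Rz - Rzᵀ * (Ruᵀ)⁻¹ * Luz - Lzu * Ru⁻¹ * Rz + Ldd) :
    (blk3 (Luu * Ru⁻¹) 0 1 (Lzu * Ru⁻¹) 1 (Rzᵀ * (Ruᵀ)⁻¹) 1 0 0) *
      (blk3 Ru Rz 0 0 H 0 0 (Luz - Luu * Ru⁻¹ * Rz) Ruᵀ) =
    blk3 Luu Luz Ruᵀ Lzu Ldd Rzᵀ Ru Rz 0 :=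
  stmt_3_general Ru Rz Luu Luz Lzu Ldd H hRu hH
end

section
/- Let K = [[L_uu, L_uz, R_uᵀ], [L_zu, L_dd, R_zᵀ], [R_u, R_z, 0]] be the KKT matrix with R_u invertible, and let P₄ = K₁K₂ with approximate reduced Hessian H invertible. Then P₄⁻¹K = [[I_n, R_u⁻¹R_z(I_m − H⁻¹L_zz), 0], [0, H⁻¹L_zz, 0], [0, R_u⁻ᵀL_yy(I_m − H⁻¹L_zz), I_n]], where L_yy = L_uz − L_uu R_u⁻¹ R_z and L_zz = R_zᵀR_u⁻ᵀL_uu R_u⁻¹R_z − R_zᵀR_u⁻ᵀL_uz − L_zu R_u⁻¹R_z + L_dd is the exact reduced Hessian. -/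
/-!
The factors are built so that `P₄ = K₁ K₂` reproduces every block of the KKT matrix `K` except
the `(z, z)` block, which is `H + L_dd - L_zz` instead of `L_dd`. A direct block multiplication
then shows `P₄ X = K` for the claimed matrix `X`, and `P₄` is invertible: `K₁` has an explicit
left inverse, and `K₂` is block triangular with diagonal blocks `R_u`, `H`, `R_uᵀ`.
-/

open Matrix

section
variable {n m : ℕ}

lemma blk3_mul
    (A11 A13 A31 A33 B11 B13 B31 B33 : Matrix (Fin n) (Fin n) ℝ)
    (A12 A32 B12 B32 : Matrix (Fin n) (Fin m) ℝ) (A21 A23 B21 B23 : Matrix (Fin m) (Fin n) ℝ)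
    (A22 B22 : Matrix (Fin m) (Fin m) ℝ) :
    blk3 A11 A12 A13 A21 A22 A23 A31 A32 A33 * blk3 B11 B12 B13 B21 B22 B23 B31 B32 B33 =
    blk3 (A11*B11 + A12*B21 + A13*B31) (A11*B12 + A12*B22 + A13*B32) (A11*B13 + A12*B23 + A13*B33)
         (A21*B11 + A22*B21 + A23*B31) (A21*B12 + A22*B22 + A23*B32) (A21*B13 + A22*B23 + A23*B33)
         (A31*B11 + A32*B21 + A33*B31) (A31*B12 + A32*B22 + A33*B32) (A31*B13 + A32*B23 + A33*B33) := by
  ext ((i | i) | i) ((j | j) | j) <;>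
    simp [blk3, mul_apply, Fintype.sum_sum_type]

lemma blk3_one : blk3 (n := n) (m := m) 1 0 0 0 1 0 0 0 1 = 1 := by
  simp [blk3, fromBlocks_one]

lemma det_blk3_blockTriangular (A F : Matrix (Fin n) (Fin n) ℝ) (B E : Matrix (Fin n) (Fin m) ℝ)
    (D : Matrix (Fin m) (Fin m) ℝ) :
    (blk3 A B 0 0 D 0 0 E F).det = A.det * D.det * F.det := by
  simp [blk3, det_fromBlocks_zero₁₂, det_fromBlocks_zero₂₁]

variable (Ru : Matrix (Fin n) (Fin n) ℝ) (Rz : Matrix (Fin n) (Fin m) ℝ) (H : Matrix (Fin m) (Fin m) ℝ)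
  (Luu : Matrix (Fin n) (Fin n) ℝ) (Luz : Matrix (Fin n) (Fin m) ℝ) (Lzu : Matrix (Fin m) (Fin n) ℝ)
  (Ldd : Matrix (Fin m) (Fin m) ℝ)

noncomputable def kkt : Matrix ((Fin n ⊕ Fin m) ⊕ Fin n) ((Fin n ⊕ Fin m) ⊕ Fin n) ℝ :=
  blk3 Luu Luz Ruᵀ Lzu Ldd Rzᵀ Ru Rz 0

noncomputable def reducedHessian : Matrix (Fin m) (Fin m) ℝ :=
  Rzᵀ * (Ruᵀ)⁻¹ * Luu * Ru⁻¹ * Rz - Rzᵀ * (Ruᵀ)⁻¹ * Luz - Lzu * Ru⁻¹ * Rz + Ldd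

/-- The factors `K₁` (`precondLeft`) and `K₂` (`precondRight`) of `P₄ = K₁ K₂`. -/
noncomputable def precondLeft : Matrix ((Fin n ⊕ Fin m) ⊕ Fin n) ((Fin n ⊕ Fin m) ⊕ Fin n) ℝ :=
  blk3 (Luu * Ru⁻¹) 0 1 (Lzu * Ru⁻¹) 1 (Rzᵀ * (Ruᵀ)⁻¹) 1 0 0

noncomputable def precondRight : Matrix ((Fin n ⊕ Fin m) ⊕ Fin n) ((Fin n ⊕ Fin m) ⊕ Fin n) ℝ :=
  blk3 Ru Rz 0 0 H 0 0 (Luz - Luu * Ru⁻¹ * Rz) Ruᵀ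

lemma isUnit_det_precondLeft : IsUnit (precondLeft Ru Rz Luu Lzu).det := by
  refine isUnit_det_of_left_inverse (B := blk3 0 0 1 (-(Rzᵀ * (Ruᵀ)⁻¹)) 1
    (Rzᵀ * (Ruᵀ)⁻¹ * (Luu * Ru⁻¹) - Lzu * Ru⁻¹) 1 0 (-(Luu * Ru⁻¹))) ?_
  rw [precondLeft, blk3_mul, ← blk3_one]
  congr 1 <;> simp [Matrix.mul_assoc]

lemma isUnit_det_precondRight (hRu : IsUnit Ru) (hH : IsUnit H) :
    IsUnit (precondRight Ru Rz H Luu Luz).det := by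
  rw [precondRight, det_blk3_blockTriangular, det_transpose]
  have hRu' := (isUnit_iff_isUnit_det Ru).mp hRu
  exact (hRu'.mul ((isUnit_iff_isUnit_det H).mp hH)).mul hRu'

lemma precondLeft_mul_precondRight (hRu : IsUnit Ru) :
    precondLeft Ru Rz Luu Lzu * precondRight Ru Rz H Luu Luz =
      kkt Ru Rz Luu Luz Lzu (H + Ldd - reducedHessian Ru Rz Luu Luz Lzu Ldd) := by
  have := hRu.invertible
  rw [precondLeft, precondRight, kkt, blk3_mul, reducedHessian]
  congr 1 <;>
    simp only [Matrix.mul_assoc, Matrix.mul_sub, inv_mul_of_invertible, Matrix.mul_one,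
      Matrix.one_mul, Matrix.mul_zero, Matrix.zero_mul, add_zero, zero_add] <;> abel

noncomputable def preconditionedKKT : Matrix ((Fin n ⊕ Fin m) ⊕ Fin n) ((Fin n ⊕ Fin m) ⊕ Fin n) ℝ :=
  let Lzz := reducedHessian Ru Rz Luu Luz Lzu Ldd
  blk3 1 (Ru⁻¹ * Rz * (1 - H⁻¹ * Lzz)) 0 0 (H⁻¹ * Lzz) 0
    0 ((Ruᵀ)⁻¹ * (Luz - Luu * Ru⁻¹ * Rz) * (1 - H⁻¹ * Lzz)) 1

lemma kkt_mul_preconditionedKKT (hRu : IsUnit Ru) (hH : IsUnit H) :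
    kkt Ru Rz Luu Luz Lzu (H + Ldd - reducedHessian Ru Rz Luu Luz Lzu Ldd) *
      preconditionedKKT Ru Rz H Luu Luz Lzu Ldd = kkt Ru Rz Luu Luz Lzu Ldd := by
  have := hRu.invertible
  have := hH.invertible
  rw [kkt, kkt, preconditionedKKT, blk3_mul, reducedHessian]
  -- the `(z, z)` block is `(L_dd - L_zz)(1 - H⁻¹L_zz) + (H + L_dd - L_zz)H⁻¹L_zz = L_dd`
  congr 1 <;>
    simp only [Matrix.mul_assoc, Matrix.mul_sub, Matrix.sub_mul, Matrix.add_mul,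
      mul_inv_cancel_left_of_invertible, Matrix.mul_one, Matrix.mul_zero, Matrix.zero_mul, add_zero,
      zero_add] <;> abel

end

theorem stmt_6_general {n m : ℕ} (Ru : Matrix (Fin n) (Fin n) ℝ) (Rz : Matrix (Fin n) (Fin m) ℝ)
    (H : Matrix (Fin m) (Fin m) ℝ) (Luu : Matrix (Fin n) (Fin n) ℝ)
    (Luz : Matrix (Fin n) (Fin m) ℝ) (Lzu : Matrix (Fin m) (Fin n) ℝ)
    (Ldd : Matrix (Fin m) (Fin m) ℝ)
    (hRu : IsUnit Ru) (hH : IsUnit H) :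
    ((blk3 (Luu * Ru⁻¹) 0 1 (Lzu * Ru⁻¹) 1 (Rzᵀ * (Ruᵀ)⁻¹) 1 0 0) *
        (blk3 Ru Rz 0 0 H 0 0 (Luz - Luu * Ru⁻¹ * Rz) Ruᵀ))⁻¹ *
      (blk3 Luu Luz Ruᵀ Lzu Ldd Rzᵀ Ru Rz 0) =
    blk3 1 (Ru⁻¹ * Rz * (1 - H⁻¹ * (Rzᵀ * (Ruᵀ)⁻¹ * Luu * Ru⁻¹ * Rz - Rzᵀ * (Ruᵀ)⁻¹ * Luz - Lzu * Ru⁻¹ * Rz + Ldd))) 0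
         0 (H⁻¹ * (Rzᵀ * (Ruᵀ)⁻¹ * Luu * Ru⁻¹ * Rz - Rzᵀ * (Ruᵀ)⁻¹ * Luz - Lzu * Ru⁻¹ * Rz + Ldd)) 0
         0 ((Ruᵀ)⁻¹ * (Luz - Luu * Ru⁻¹ * Rz) * (1 - H⁻¹ * (Rzᵀ * (Ruᵀ)⁻¹ * Luu * Ru⁻¹ * Rz - Rzᵀ * (Ruᵀ)⁻¹ * Luz - Lzu * Ru⁻¹ * Rz + Ldd))) 1 := by
  change (precondLeft Ru Rz Luu Lzu * precondRight Ru Rz H Luu Luz)⁻¹ * kkt Ru Rz Luu Luz Lzu Ldd =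
    preconditionedKKT Ru Rz H Luu Luz Lzu Ldd
  have hP : IsUnit (precondLeft Ru Rz Luu Lzu * precondRight Ru Rz H Luu Luz).det := by
    rw [det_mul]
    exact (isUnit_det_precondLeft Ru Rz Luu Lzu).mul (isUnit_det_precondRight Ru Rz H Luu Luz hRu hH)
  rw [← kkt_mul_preconditionedKKT Ru Rz H Luu Luz Lzu Ldd hRu hH,
    ← precondLeft_mul_precondRight Ru Rz H Luu Luz Lzu Ldd hRu]
  exact nonsing_inv_mul_cancel_left _ _ hP

/-- Corrected form of the `P₄`-preconditioned KKT system `P₄⁻¹ K` where `P₄ = K₁K₂`,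
`L_yy = L_uz − L_uu R_u⁻¹ R_z`, and `L_zz` is the exact reduced Hessian. -/
theorem stmt_6 {n m : ℕ} (Ru : Matrix (Fin n) (Fin n) ℝ) (Rz : Matrix (Fin n) (Fin m) ℝ)
    (H : Matrix (Fin m) (Fin m) ℝ) (Luu : Matrix (Fin n) (Fin n) ℝ)
    (Luz : Matrix (Fin n) (Fin m) ℝ) (Lzu : Matrix (Fin m) (Fin n) ℝ)
    (Ldd : Matrix (Fin m) (Fin m) ℝ)
    (hRu : IsUnit Ru) (hH : IsUnit H) (hLzu : Lzu = Luzᵀ) :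
    ((blk3 (Luu * Ru⁻¹) 0 1 (Lzu * Ru⁻¹) 1 (Rzᵀ * (Ruᵀ)⁻¹) 1 0 0) *
        (blk3 Ru Rz 0 0 H 0 0 (Luz - Luu * Ru⁻¹ * Rz) Ruᵀ))⁻¹ *
      (blk3 Luu Luz Ruᵀ Lzu Ldd Rzᵀ Ru Rz 0) =
    blk3 1 (Ru⁻¹ * Rz * (1 - H⁻¹ * (Rzᵀ * (Ruᵀ)⁻¹ * Luu * Ru⁻¹ * Rz - Rzᵀ * (Ruᵀ)⁻¹ * Luz - Lzu * Ru⁻¹ * Rz + Ldd))) 0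
         0 (H⁻¹ * (Rzᵀ * (Ruᵀ)⁻¹ * Luu * Ru⁻¹ * Rz - Rzᵀ * (Ruᵀ)⁻¹ * Luz - Lzu * Ru⁻¹ * Rz + Ldd)) 0
         0 ((Ruᵀ)⁻¹ * (Luz - Luu * Ru⁻¹ * Rz) * (1 - H⁻¹ * (Rzᵀ * (Ruᵀ)⁻¹ * Luu * Ru⁻¹ * Rz - Rzᵀ * (Ruᵀ)⁻¹ * Luz - Lzu * Ru⁻¹ * Rz + Ldd))) 1 :=
  stmt_6_general Ru Rz H Luu Luz Lzu Ldd hRu hH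
end

section
/- Let K = [[L_uu, L_uz, R_uᵀ], [L_uzᵀ, L_dd, R_zᵀ], [R_u, R_z, 0]] with R_u invertible and L blocks forming a symmetric Hessian. Then K is invertible if and only if the reduced Hessian L_zz = L_dd + R_zᵀR_u⁻ᵀL_uu R_u⁻¹R_z − R_zᵀR_u⁻ᵀL_uz − L_uzᵀR_u⁻¹R_z is invertible. -/
/-!
Reorder the unknowns as `((u, λ), z)`. The `(u, λ)` block `[[L_uu, R_uᵀ], [R_u, 0]]` is invertible
whenever `R_u` is, with the explicit inverse `[[0, R_u⁻¹], [R_u⁻ᵀ, -R_u⁻ᵀ L_uu R_u⁻¹]]`, so `K` is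
invertible iff the Schur complement of that block is; expanding the complement gives `L_zz`.
-/

open Matrix

def Equiv.sumRightComm (α β γ : Type*) : (α ⊕ β) ⊕ γ ≃ (α ⊕ γ) ⊕ β :=
  (sumAssoc α β γ).trans ((sumCongr (Equiv.refl α) (sumComm β γ)).trans (sumAssoc α γ β).symm)

namespace Matrix

variable {α : Type*} {l m n : Type*}

theorem submatrix_sumRightComm_fromBlocks_fromBlocks (A : Matrix l l α) (B : Matrix l m α)
    (E : Matrix l n α) (C : Matrix m l α) (D : Matrix m m α) (F : Matrix m n α)
    (G : Matrix n l α) (H : Matrix n m α) (J : Matrix n n α) :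
    (fromBlocks (fromBlocks A B C D) (fromRows E F) (fromCols G H) J).submatrix
        (Equiv.sumRightComm l n m) (Equiv.sumRightComm l n m) =
      fromBlocks (fromBlocks A E G J) (fromRows B H) (fromCols C F) D := by
  ext ((i | i) | i) ((j | j) | j) <;> rfl

variable [CommRing α] [Fintype n] [DecidableEq n]

theorem fromBlocks_transpose_zero_mul_inv (H R : Matrix n n α) (hR : IsUnit R) :
    fromBlocks H Rᵀ R 0 * fromBlocks 0 R⁻¹ Rᵀ⁻¹ (-(Rᵀ⁻¹ * H * R⁻¹)) = 1 := by
  have hdet : IsUnit R.det := (isUnit_iff_isUnit_det R).mp hR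
  have hdetT : IsUnit Rᵀ.det := by rwa [det_transpose]
  rw [fromBlocks_multiply, ← fromBlocks_one]
  simp [Matrix.mul_assoc, mul_nonsing_inv _ hdet, mul_nonsing_inv _ hdetT,
    mul_nonsing_inv_cancel_left _ _ hdetT]

theorem fromCols_mul_fromBlocks_mul_fromRows (H R : Matrix n n α) (L S : Matrix n m α) :
    fromCols Lᵀ Sᵀ * fromBlocks 0 R⁻¹ Rᵀ⁻¹ (-(Rᵀ⁻¹ * H * R⁻¹)) * fromRows L S =
      Sᵀ * Rᵀ⁻¹ * L + Lᵀ * R⁻¹ * S - Sᵀ * Rᵀ⁻¹ * H * R⁻¹ * S := by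
  rw [fromCols_mul_fromBlocks, fromCols_mul_fromRows]
  simp only [Matrix.mul_zero, zero_add, Matrix.mul_neg, Matrix.mul_assoc, Matrix.add_mul,
    Matrix.neg_mul]
  abel

end Matrix

theorem stmt_17_general {n m : ℕ} (Ru : Matrix (Fin n) (Fin n) ℝ) (Rz : Matrix (Fin n) (Fin m) ℝ)
    (Luu : Matrix (Fin n) (Fin n) ℝ) (Luz : Matrix (Fin n) (Fin m) ℝ)
    (Ldd : Matrix (Fin m) (Fin m) ℝ)
    (hRu : IsUnit Ru) :
    IsUnit (blk3 Luu Luz Ruᵀ Luzᵀ Ldd Rzᵀ Ru Rz 0) ↔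
      IsUnit (Ldd + Rzᵀ * (Ruᵀ)⁻¹ * Luu * Ru⁻¹ * Rz - Rzᵀ * (Ruᵀ)⁻¹ * Luz - Luzᵀ * Ru⁻¹ * Rz) := by
  have hinv := fromBlocks_transpose_zero_mul_inv Luu Ru hRu
  let _ := invertibleOfRightInverse _ _ hinv
  rw [← isUnit_submatrix_equiv (Equiv.sumRightComm _ _ _) (Equiv.sumRightComm _ _ _), blk3,
    submatrix_sumRightComm_fromBlocks_fromBlocks, isUnit_fromBlocks_iff_of_invertible₁₁,
    invOf_eq_right_inv hinv, fromCols_mul_fromBlocks_mul_fromRows]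
  congr! 1
  abel

/-- The KKT matrix `K` with `R_u` invertible and symmetric Hessian blocks is invertible
iff the reduced Hessian `L_zz` is invertible. -/
theorem stmt_17 {n m : ℕ} (Ru : Matrix (Fin n) (Fin n) ℝ) (Rz : Matrix (Fin n) (Fin m) ℝ)
    (Luu : Matrix (Fin n) (Fin n) ℝ) (Luz : Matrix (Fin n) (Fin m) ℝ)
    (Ldd : Matrix (Fin m) (Fin m) ℝ)
    (hRu : IsUnit Ru) (hLuu : Luuᵀ = Luu) (hLdd : Lddᵀ = Ldd) :
    IsUnit (blk3 Luu Luz Ruᵀ Luzᵀ Ldd Rzᵀ Ru Rz 0) ↔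
      IsUnit (Ldd + Rzᵀ * (Ruᵀ)⁻¹ * Luu * Ru⁻¹ * Rz - Rzᵀ * (Ruᵀ)⁻¹ * Luz - Luzᵀ * Ru⁻¹ * Rz) :=
  stmt_17_general Ru Rz Luu Luz Ldd hRu
end
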